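/- arXiv:2103.09722 — 3 statements merged into one kernel-verified Lean document; each statement's English description precedes it below -/
import Mathlib

section
/- Let q ≥ 2 be odd, let (P, L) be a finite projective plane of order q, and let B be a projective bundle. Suppose L' ⊆ L is a set of r lines and O' ⊆ B is a set of s ovals with r + s = q + 2, such that every point of P belongs to an even number of elements of L' ⊔ O'. Then either r = 1 and s = q+1, in which case O' consists exactly of the q+1 ovals of B tangent to the unique line of L', or r = q+1 and s = 1, in which case L' consists exactly of the q+1 lines tangent to the unique oval of O'. -/
/-- A finite projective plane of order `q`, given by its set of lines (each line a
finite set of points of the ambient point type `P`): any two distinct points lie on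
exactly one common line, any two distinct lines meet in exactly one point, there are
four points no three of which are collinear, and every line has `q + 1` points. -/
structure IsProjectivePlane (q : ℕ) {P : Type} [DecidableEq P] (L : Finset (Finset P)) : Prop where
  exists_unique_line : ∀ p₁ p₂ : P, p₁ ≠ p₂ → ∃! ℓ, ℓ ∈ L ∧ p₁ ∈ ℓ ∧ p₂ ∈ ℓ
  exists_unique_point : ∀ ℓ₁ ∈ L, ∀ ℓ₂ ∈ L, ℓ₁ ≠ ℓ₂ → ∃! p, p ∈ ℓ₁ ∧ p ∈ ℓ₂
  nondeg : ∃ a b c d : P, a ≠ b ∧ a ≠ c ∧ a ≠ d ∧ b ≠ c ∧ b ≠ d ∧ c ≠ d ∧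
      ∀ ℓ ∈ L, (ℓ ∩ ({a, b, c, d} : Finset P)).card ≤ 2
  card_line : ∀ ℓ ∈ L, ℓ.card = q + 1

/-- An oval: a set of `q + 1` points such that every line contains at most two of them. -/
def IsOval (q : ℕ) {P : Type} [DecidableEq P] (L : Finset (Finset P)) (O : Finset P) : Prop :=
  O.card = q + 1 ∧ ∀ ℓ ∈ L, (ℓ ∩ O).card ≤ 2

/-- A projective bundle: a set of `q² + q + 1` ovals, any two of which meet in
exactly one point. -/
def IsProjectiveBundle (q : ℕ) {P : Type} [DecidableEq P] (L : Finset (Finset P))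
    (B : Finset (Finset P)) : Prop :=
  B.card = q ^ 2 + q + 1 ∧ (∀ o ∈ B, IsOval q L o) ∧
    ∀ o₁ ∈ B, ∀ o₂ ∈ B, o₁ ≠ o₂ → (o₁ ∩ o₂).card = 1

/-!
Lines and bundle ovals are both the blocks of a symmetric `2-(q² + q + 1, q + 1, 1)` design, and
a line meets an oval in at most two points, so the two kinds of blocks play symmetric roles; as
`r + s = q + 2` is odd we may assume `r` odd. Summing the parity condition over the points of a
line `m ∉ L'` shows that `r + ∑_{o ∈ O'} |m ∩ o|` is even, so `m` is tangent to an oval of `O'`.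
Every oval has exactly `q + 1` tangent lines, whence `q² + q + 1 - r ≤ s (q + 1)`, which forces
`r = 1` and `s = q + 1`. Summing the parity condition over an oval `o ∈ O'` shows that
`|o ∩ ℓ| + 2q + 1` is even for the line `ℓ` of `L'`, so `o` is tangent to `ℓ`, and the `q + 1`
ovals of `O'` are all the ovals tangent to `ℓ`.
-/

open Finset

section DoubleCounting

variable {α β : Type*}

theorem Finset.card_filter_eq_one_of_existsUnique {s : Finset α} {r : α → Prop} [DecidablePred r]
    (h : ∃! a, a ∈ s ∧ r a) : #(s.filter r) = 1 :=
  card_eq_one_iff_existsUnique.mpr <| by simpa only [mem_filter] using h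

theorem sum_card_inter_eq_sum_card_filter_mem [DecidableEq α] (S : Finset (Finset α))
    (m : Finset α) : ∑ X ∈ S, #(m ∩ X) = ∑ p ∈ m, #(S.filter (p ∈ ·)) := by
  simp_rw [← filter_mem_eq_inter]
  exact (sum_card_bipartiteAbove_eq_sum_card_bipartiteBelow (fun p X => p ∈ X)).symm

theorem sum_card_offDiag_filter [DecidableEq β] (s : Finset α) (t : Finset β)
    (r : α → β → Prop) [∀ a b, Decidable (r a b)] :
    ∑ a ∈ s, #(t.filter (r a)).offDiag =
      ∑ b ∈ t.offDiag, #(s.filter fun a => r a b.1 ∧ r a b.2) := by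
  have h : ∀ a, (t.filter (r a)).offDiag = t.offDiag.filter fun b => r a b.1 ∧ r a b.2 := by
    intro a
    ext b
    simp only [mem_offDiag, mem_filter]
    tauto
  simp only [h]
  exact sum_card_bipartiteAbove_eq_sum_card_bipartiteBelow _

theorem sum_card_filter_mem_mem [Fintype α] [DecidableEq α] (F : Finset (Finset α)) (p : α) :
    ∑ p' ∈ univ.erase p, #(F.filter fun X => p ∈ X ∧ p' ∈ X) =
      ∑ X ∈ F.filter (p ∈ ·), (#X - 1) := by
  have h : ∀ X ∈ F.filter (p ∈ ·), (univ.erase p).filter (· ∈ X) = X.erase p := by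
    intro X _
    ext x
    simp only [mem_filter, mem_erase, mem_univ, and_true]
  simp only [← filter_filter]
  refine (sum_card_bipartiteAbove_eq_sum_card_bipartiteBelow (fun p' X => p' ∈ X)).trans ?_
  refine sum_congr rfl fun X hX => ?_
  rw [bipartiteBelow, h X hX, card_erase_of_mem (mem_filter.mp hX).2]

theorem even_sum_card_inter [DecidableEq α] {F' G' : Finset (Finset α)}
    (heven : ∀ p : α, Even (#(F'.filter fun X => p ∈ X) + #(G'.filter fun Y => p ∈ Y)))
    (m : Finset α) : Even (∑ X ∈ F', #(m ∩ X) + ∑ Y ∈ G', #(m ∩ Y)) := by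
  rw [sum_card_inter_eq_sum_card_filter_mem, sum_card_inter_eq_sum_card_filter_mem,
    ← sum_add_distrib]
  exact even_sum _ fun p _ => heven p

end DoubleCounting

/-- The blocks of a symmetric `2-(q² + q + 1, q + 1, 1)` design, axiomatized from the side of
the blocks only: the point-side axioms are derived below by double counting. -/
structure IsSymmetricDesign (q : ℕ) {P : Type*} [Fintype P] [DecidableEq P]
    (F : Finset (Finset P)) : Prop where
  card_points : Fintype.card P = q ^ 2 + q + 1
  card_blocks : #F = q ^ 2 + q + 1
  card_block : ∀ X ∈ F, #X = q + 1
  card_inter : ∀ X ∈ F, ∀ Y ∈ F, X ≠ Y → #(X ∩ Y) = 1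

namespace IsSymmetricDesign

variable {q : ℕ} {P : Type*} [Fintype P] [DecidableEq P] {F : Finset (Finset P)}

theorem sum_card_filter_mem (hF : IsSymmetricDesign q F) :
    ∑ p, #(F.filter (p ∈ ·)) = (q ^ 2 + q + 1) * (q + 1) := by
  rw [← sum_card_inter_eq_sum_card_filter_mem, sum_congr rfl fun X hX => by
    rw [univ_inter, hF.card_block X hX], sum_const, hF.card_blocks, smul_eq_mul]

theorem sum_card_offDiag_filter_mem (hF : IsSymmetricDesign q F) :
    ∑ p, #(F.filter (p ∈ ·)).offDiag = (q ^ 2 + q + 1) * (q ^ 2 + q) := by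
  have hone : ∀ b ∈ F.offDiag, #(univ.filter fun p => p ∈ b.1 ∧ p ∈ b.2) = 1 := by
    intro b hb
    obtain ⟨h₁, h₂, hne⟩ := mem_offDiag.mp hb
    rw [← hF.card_inter _ h₁ _ h₂ hne]
    congr 1
    ext
    simp
  rw [sum_card_offDiag_filter, sum_congr rfl hone, sum_const, smul_eq_mul, mul_one,
    offDiag_card, hF.card_blocks, Nat.sub_eq_iff_eq_add (Nat.le_mul_self _)]
  ring

/-- The degrees `n p` have mean `q + 1` and, as `∑ n p (n p - 1)` counts ordered pairs of
distinct blocks, variance `0`. -/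
theorem card_filter_mem (hF : IsSymmetricDesign q F) (p : P) : #(F.filter (p ∈ ·)) = q + 1 := by
  set n : P → ℕ := fun p => #(F.filter (p ∈ ·))
  have hsum : ∑ p, (n p : ℤ) = (q ^ 2 + q + 1) * (q + 1) := by
    exact_mod_cast hF.sum_card_filter_mem
  have hpairs : ∑ p, ((n p : ℤ) ^ 2 - n p) = (q ^ 2 + q + 1) * (q ^ 2 + q) := by
    have hcast : ∀ k : ℕ, ((k * k - k : ℕ) : ℤ) = (k : ℤ) ^ 2 - k := fun k => by
      rw [Nat.cast_sub (Nat.le_mul_self k)]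
      push_cast
      ring
    have h := congrArg (Nat.cast : ℕ → ℤ) hF.sum_card_offDiag_filter_mem
    simp only [offDiag_card, Nat.cast_sum, hcast] at h
    exact_mod_cast h
  have hvar : ∑ p, ((n p : ℤ) - (q + 1)) ^ 2 = 0 := by
    have h : ∀ p, ((n p : ℤ) - (q + 1)) ^ 2 =
        ((n p : ℤ) ^ 2 - n p) - (2 * q + 1) * n p + (q + 1) ^ 2 := fun p => by ring
    rw [sum_congr rfl fun p _ => h p, sum_add_distrib, sum_sub_distrib, ← mul_sum, sum_const,
      hpairs, hsum, card_univ, hF.card_points]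
    ring
  have hp := (sum_eq_zero_iff_of_nonneg fun p _ => sq_nonneg ((n p : ℤ) - (q + 1))).mp hvar p
    (mem_univ p)
  have : (n p : ℤ) = q + 1 := by linarith [pow_eq_zero_iff two_ne_zero |>.mp hp]
  exact_mod_cast this

theorem card_filter_mem_mem (hF : IsSymmetricDesign q F) {p p' : P} (hne : p ≠ p') :
    #(F.filter fun X => p ∈ X ∧ p' ∈ X) = 1 := by
  have hle : ∀ x ∈ univ.erase p, #(F.filter fun X => p ∈ X ∧ x ∈ X) ≤ 1 := by
    intro x hx
    refine card_le_one.mpr fun X hX Y hY => by_contra fun hXY => ?_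
    simp only [mem_filter] at hX hY
    have h2 : #({p, x} : Finset P) ≤ #(X ∩ Y) :=
      card_le_card fun y hy => by
        rcases mem_insert.mp hy with rfl | hy
        · exact mem_inter.mpr ⟨hX.2.1, hY.2.1⟩
        · rw [mem_singleton.mp hy]
          exact mem_inter.mpr ⟨hX.2.2, hY.2.2⟩
    rw [card_pair (ne_of_mem_erase hx).symm, hF.card_inter X hX.1 Y hY.1 hXY] at h2
    omega
  have hsum : ∑ x ∈ univ.erase p, #(F.filter fun X => p ∈ X ∧ x ∈ X) =
      ∑ x ∈ univ.erase p, 1 := by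
    rw [sum_card_filter_mem_mem,
      sum_congr rfl fun X hX => by rw [hF.card_block X (mem_filter.mp hX).1], sum_const, sum_const, hF.card_filter_mem, card_erase_of_mem (mem_univ p), card_univ,
      hF.card_points, smul_eq_mul, smul_eq_mul]
    simp only [Nat.add_sub_cancel]
    ring
  exact (sum_eq_sum_iff_of_le hle).mp hsum p' (mem_erase.mpr ⟨hne.symm, mem_univ p'⟩)

/-- Counting incidences and pairs of incidences between `F` and the points of `m` gives
`∑ c X = (q + 1)²` and `∑ c X (c X - 1) = (q + 1) q` for `c X = #(X ∩ m) ≤ 2`, and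
`c = [c = 1] + c (c - 1)` for such `c`. -/
theorem card_filter_card_inter_eq_one (hF : IsSymmetricDesign q F) {m : Finset P}
    (hm : #m = q + 1) (hsec : ∀ X ∈ F, #(X ∩ m) ≤ 2) :
    #(F.filter fun X => #(X ∩ m) = 1) = q + 1 := by
  have hinc : ∑ X ∈ F, #(X ∩ m) = (q + 1) * (q + 1) := by
    simp_rw [inter_comm _ m]
    rw [sum_card_inter_eq_sum_card_filter_mem, sum_congr rfl fun p _ => hF.card_filter_mem p,
      sum_const, hm, smul_eq_mul]
  have hpairs : ∑ X ∈ F, (#(X ∩ m) * #(X ∩ m) - #(X ∩ m)) = (q + 1) * (q + 1) - (q + 1) := by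
    have h := sum_card_offDiag_filter F m (fun X x => x ∈ X)
    rw [sum_congr rfl fun b hb => hF.card_filter_mem_mem (mem_offDiag.mp hb).2.2, sum_const,
      smul_eq_mul, mul_one, offDiag_card, hm] at h
    rw [← h]
    refine sum_congr rfl fun X _ => ?_
    rw [filter_mem_eq_inter, inter_comm, offDiag_card]
  have hsplit : ∀ X ∈ F, #(X ∩ m) =
      (if #(X ∩ m) = 1 then 1 else 0) + (#(X ∩ m) * #(X ∩ m) - #(X ∩ m)) := by
    intro X hX
    have := hsec X hX
    interval_cases #(X ∩ m) <;> rfl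
  rw [sum_congr rfl hsplit, sum_add_distrib, ← card_filter, hpairs] at hinc
  have : (q + 1) * (q + 1) - (q + 1) = (q + 1) * q := by
    rw [Nat.sub_eq_iff_eq_add (Nat.le_mul_of_pos_right _ (by omega))]
    ring
  rw [this] at hinc
  nlinarith

end IsSymmetricDesign

namespace IsProjectivePlane

variable {q : ℕ} {P : Type} [DecidableEq P] {L : Finset (Finset P)}

theorem card_inter (hL : IsProjectivePlane q L) {ℓ₁ ℓ₂ : Finset P} (h₁ : ℓ₁ ∈ L) (h₂ : ℓ₂ ∈ L)
    (hne : ℓ₁ ≠ ℓ₂) : #(ℓ₁ ∩ ℓ₂) = 1 := by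
  rw [← filter_mem_eq_inter]
  exact card_filter_eq_one_of_existsUnique (hL.exists_unique_point ℓ₁ h₁ ℓ₂ h₂ hne)

theorem card_filter_mem_mem (hL : IsProjectivePlane q L) {p p' : P} (hne : p ≠ p') :
    #(L.filter fun ℓ => p ∈ ℓ ∧ p' ∈ ℓ) = 1 :=
  card_filter_eq_one_of_existsUnique (hL.exists_unique_line p p' hne)

theorem exists_notMem (hL : IsProjectivePlane q L) (p : P) : ∃ ℓ ∈ L, p ∉ ℓ := by
  obtain ⟨a, b, c, d, hab, hac, had, hbc, -, hcd, hquad⟩ := hL.nondeg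
  have hcollinear : ∀ ℓ ∈ L, ∀ x ∈ ({a, b, c, d} : Finset P), ∀ y ∈ ({a, b, c, d} : Finset P),
      ∀ z ∈ ({a, b, c, d} : Finset P), x ≠ y → x ≠ z → y ≠ z → x ∈ ℓ → y ∈ ℓ → z ∉ ℓ := by
    intro ℓ hℓ x hx y hy z hz hxy hxz hyz hxℓ hyℓ hzℓ
    have h3 : #({x, y, z} : Finset P) ≤ #(ℓ ∩ {a, b, c, d}) := card_le_card <| by
      simp only [insert_subset_iff, singleton_subset_iff, mem_inter]
      exact ⟨⟨hxℓ, hx⟩, ⟨hyℓ, hy⟩, ⟨hzℓ, hz⟩⟩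
    rw [card_eq_three.mpr ⟨x, y, z, hxy, hxz, hyz, rfl⟩] at h3
    exact absurd (h3.trans (hquad ℓ hℓ)) (by norm_num)
  obtain ⟨ℓab, ⟨hab₁, hab₂, hab₃⟩, -⟩ := hL.exists_unique_line a b hab
  obtain ⟨ℓcd, ⟨hcd₁, hcd₂, hcd₃⟩, -⟩ := hL.exists_unique_line c d hcd
  obtain ⟨ℓac, ⟨hac₁, hac₂, hac₃⟩, -⟩ := hL.exists_unique_line a c hac
  by_cases hpab : p ∈ ℓab
  · by_cases hpcd : p ∈ ℓcd
    · refine ⟨ℓac, hac₁, fun hpac => ?_⟩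
      have hne : ℓab ≠ ℓac := fun h =>
        hcollinear ℓab hab₁ a (by simp) b (by simp) c (by simp) hab hac hbc hab₂ hab₃ (h ▸ hac₃)
      have hpa : p = a := (hL.exists_unique_point ℓab hab₁ ℓac hac₁ hne).unique
        ⟨hpab, hpac⟩ ⟨hab₂, hac₂⟩
      exact hcollinear ℓcd hcd₁ c (by simp) d (by simp) a (by simp) hcd hac.symm had.symm
        hcd₂ hcd₃ (hpa ▸ hpcd)
    · exact ⟨ℓcd, hcd₁, hpcd⟩
  · exact ⟨ℓab, hab₁, hpab⟩

/-- The lines through `p` are in bijection with the points of a line `ℓ₀ ∌ p`. -/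
theorem card_filter_mem (hL : IsProjectivePlane q L) (p : P) : #(L.filter (p ∈ ·)) = q + 1 := by
  obtain ⟨ℓ₀, hℓ₀, hp⟩ := hL.exists_notMem p
  have hlines : ∑ ℓ ∈ L.filter (p ∈ ·), #(ℓ₀ ∩ ℓ) = #(L.filter (p ∈ ·)) := by
    rw [card_eq_sum_ones]
    refine sum_congr rfl fun ℓ hℓ => ?_
    obtain ⟨hℓL, hpℓ⟩ := mem_filter.mp hℓ
    exact hL.card_inter hℓ₀ hℓL fun h => hp (h ▸ hpℓ)
  have hpoints : ∑ x ∈ ℓ₀, #((L.filter (p ∈ ·)).filter (x ∈ ·)) = q + 1 := by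
    rw [← hL.card_line ℓ₀ hℓ₀, card_eq_sum_ones]
    refine sum_congr rfl fun x hx => ?_
    rw [filter_filter]
    exact hL.card_filter_mem_mem fun h => hp (h ▸ hx)
  rw [← hlines, sum_card_inter_eq_sum_card_filter_mem, hpoints]

theorem card_points [Fintype P] (hL : IsProjectivePlane q L) :
    Fintype.card P = q ^ 2 + q + 1 := by
  obtain ⟨p, -⟩ := hL.nondeg
  have h := sum_card_filter_mem_mem L p
  have hpoints : ∑ x ∈ univ.erase p, #(L.filter fun ℓ => p ∈ ℓ ∧ x ∈ ℓ) = Fintype.card P - 1 := by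
    rw [← card_univ, ← card_erase_of_mem (mem_univ p), card_eq_sum_ones]
    exact sum_congr rfl fun x hx => hL.card_filter_mem_mem (ne_of_mem_erase hx).symm
  have hlines : ∑ ℓ ∈ L.filter (p ∈ ·), (#ℓ - 1) = (q + 1) * q := by
    rw [sum_congr rfl fun ℓ hℓ => by rw [hL.card_line ℓ (mem_filter.mp hℓ).1], sum_const,
      hL.card_filter_mem, smul_eq_mul, Nat.add_sub_cancel]
  have : 0 < Fintype.card P := Fintype.card_pos_iff.mpr ⟨p⟩
  rw [hpoints, hlines] at h
  rw [show Fintype.card P = (q + 1) * q + 1 by omega]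
  ring

theorem isSymmetricDesign [Fintype P] (hL : IsProjectivePlane q L) : IsSymmetricDesign q L where
  card_points := hL.card_points
  card_blocks := by
    have h := sum_card_inter_eq_sum_card_filter_mem L univ
    simp only [univ_inter, sum_congr rfl hL.card_line,
      sum_congr rfl fun p _ => hL.card_filter_mem p, sum_const, smul_eq_mul, card_univ, hL.card_points] at h
    exact Nat.eq_of_mul_eq_mul_right (Nat.succ_pos q) h
  card_block := hL.card_line
  card_inter _ h₁ _ h₂ hne := hL.card_inter h₁ h₂ hne

end IsProjectivePlane

section EvenCover

variable {q : ℕ} {P : Type*} [Fintype P] [DecidableEq P] {F G F' G' : Finset (Finset P)}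

theorem exists_card_inter_eq_one_of_odd (hF : IsSymmetricDesign q F)
    (hFG : ∀ X ∈ F, ∀ Y ∈ G, #(X ∩ Y) ≤ 2) (hF' : F' ⊆ F) (hG' : G' ⊆ G)
    (heven : ∀ p : P, Even (#(F'.filter fun X => p ∈ X) + #(G'.filter fun Y => p ∈ Y)))
    (hr : Odd #F') {m : Finset P} (hm : m ∈ F) (hmF' : m ∉ F') :
    ∃ Y ∈ G', #(m ∩ Y) = 1 := by
  have hF'sum : ∑ X ∈ F', #(m ∩ X) = #F' := by
    rw [card_eq_sum_ones]
    exact sum_congr rfl fun X hX => hF.card_inter m hm X (hF' hX) fun h => hmF' (h ▸ hX)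
  by_contra! hnone
  have hG'sum : Even (∑ Y ∈ G', #(m ∩ Y)) := even_sum _ fun Y hY => by
    have := hFG m hm Y (hG' hY)
    have := hnone Y hY
    rw [Nat.even_iff]
    omega
  have h := even_sum_card_inter heven m
  rw [hF'sum, Nat.even_add] at h
  exact Nat.not_even_iff_odd.mpr hr (h.mpr hG'sum)

theorem card_blocks_le_of_odd (hF : IsSymmetricDesign q F) (hG : IsSymmetricDesign q G)
    (hFG : ∀ X ∈ F, ∀ Y ∈ G, #(X ∩ Y) ≤ 2) (hF' : F' ⊆ F) (hG' : G' ⊆ G)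
    (heven : ∀ p : P, Even (#(F'.filter fun X => p ∈ X) + #(G'.filter fun Y => p ∈ Y)))
    (hr : Odd #F') : q ^ 2 + q + 1 ≤ #G' * (q + 1) + #F' := by
  have hcover : F \ F' ⊆ G'.biUnion fun Y => F.filter fun X => #(X ∩ Y) = 1 := by
    intro m hm
    obtain ⟨hmF, hmF'⟩ := mem_sdiff.mp hm
    obtain ⟨Y, hY, hmY⟩ := exists_card_inter_eq_one_of_odd hF hFG hF' hG' heven hr hmF hmF'
    exact mem_biUnion.mpr ⟨Y, hY, mem_filter.mpr ⟨hmF, hmY⟩⟩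
  have htangents : ∑ Y ∈ G', #(F.filter fun X => #(X ∩ Y) = 1) = #G' * (q + 1) := by
    rw [sum_congr rfl fun Y hY => hF.card_filter_card_inter_eq_one (hG.card_block Y (hG' hY))
      fun X hX => hFG X hX Y (hG' hY), sum_const, smul_eq_mul]
  rw [← hF.card_blocks, ← card_sdiff_add_card_eq_card hF', ← htangents]
  exact Nat.add_le_add_right ((card_le_card hcover).trans card_biUnion_le) _

theorem eq_filter_card_inter_eq_one (hG : IsSymmetricDesign q G) {X : Finset P}
    (hX : #X = q + 1) (hGX : ∀ Y ∈ G, #(Y ∩ X) ≤ 2) (hG' : G' ⊆ G) (hs : #G' = q + 1)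
    (heven : ∀ p : P, Even (#(({X} : Finset (Finset P)).filter fun X => p ∈ X) +
      #(G'.filter fun Y => p ∈ Y))) :
    G' = G.filter fun Y => #(Y ∩ X) = 1 := by
  have hsub : G' ⊆ G.filter fun Y => #(Y ∩ X) = 1 := by
    intro Y hY
    have hG'sum : ∑ Y' ∈ G', #(Y ∩ Y') = 2 * q + 1 := by
      rw [← add_sum_erase _ _ hY, inter_self, hG.card_block Y (hG' hY),
        sum_congr rfl fun Y' hY' => hG.card_inter Y (hG' hY) Y' (hG' (mem_of_mem_erase hY'))
          (ne_of_mem_erase hY').symm,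
        sum_const, card_erase_of_mem hY, hs, smul_eq_mul, mul_one]
      omega
    have h := even_sum_card_inter heven Y
    rw [sum_singleton, hG'sum, Nat.even_iff] at h
    have := hGX Y (hG' hY)
    exact mem_filter.mpr ⟨hG' hY, by omega⟩
  refine eq_of_subset_of_card_le hsub ?_
  rw [hG.card_filter_card_inter_eq_one hX hGX, hs]

theorem card_eq_one_and_eq_filter_of_odd (hq : 2 ≤ q) (hF : IsSymmetricDesign q F)
    (hG : IsSymmetricDesign q G) (hFG : ∀ X ∈ F, ∀ Y ∈ G, #(X ∩ Y) ≤ 2) (hF' : F' ⊆ F)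
    (hG' : G' ⊆ G) (hcard : #F' + #G' = q + 2)
    (heven : ∀ p : P, Even (#(F'.filter fun X => p ∈ X) + #(G'.filter fun Y => p ∈ Y)))
    (hr : Odd #F') :
    #F' = 1 ∧ #G' = q + 1 ∧ ∃ X, F' = {X} ∧ G' = G.filter fun Y => #(Y ∩ X) = 1 := by
  have hbound := card_blocks_le_of_odd hF hG hFG hF' hG' heven hr
  have hr1 : #F' = 1 := by
    obtain ⟨j, hj⟩ := hr
    by_contra hne
    have hs : #G' + 1 ≤ q := by omega
    nlinarith
  have hs : #G' = q + 1 := by omega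
  obtain ⟨X, hX⟩ := card_eq_one.mp hr1
  have hXF : X ∈ F := hF' (hX ▸ mem_singleton_self X)
  refine ⟨hr1, hs, X, hX, eq_filter_card_inter_eq_one hG (hF.card_block X hXF)
    (fun Y hY => inter_comm X Y ▸ hFG X hXF Y hY) hG' hs (hX ▸ heven)⟩

end EvenCover

/-- For `q ≥ 2` odd: if `r` lines `L' ⊆ L` and `s` ovals `O' ⊆ B` with
`r + s = q + 2` cover every point an even number of times, then either `r = 1`, `s = q + 1`
and `O'` consists exactly of the `q + 1` ovals of `B` tangent to the unique line of `L'`,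
or `r = q + 1`, `s = 1` and `L'` consists exactly of the `q + 1` lines tangent to the
unique oval of `O'`. -/
theorem statement_13 (q : ℕ) (hq : 2 ≤ q) (hodd : Odd q) (P : Type) [Fintype P] [DecidableEq P]
    (L : Finset (Finset P)) (hL : IsProjectivePlane q L)
    (B : Finset (Finset P)) (hB : IsProjectiveBundle q L B)
    (L' O' : Finset (Finset P)) (hL' : L' ⊆ L) (hO' : O' ⊆ B)
    (hcard : L'.card + O'.card = q + 2)
    (heven : ∀ p : P,
      Even ((L'.filter fun ℓ => p ∈ ℓ).card + (O'.filter fun o => p ∈ o).card)) :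
    (L'.card = 1 ∧ O'.card = q + 1 ∧
      ∃ ℓ, L' = {ℓ} ∧ O' = B.filter fun o => (o ∩ ℓ).card = 1) ∨
    (L'.card = q + 1 ∧ O'.card = 1 ∧
      ∃ o, O' = {o} ∧ L' = L.filter fun ℓ => (ℓ ∩ o).card = 1) := by
  obtain ⟨hBcard, hBovals, hBinter⟩ := hB
  have hLdesign : IsSymmetricDesign q L := hL.isSymmetricDesign
  have hBdesign : IsSymmetricDesign q B :=
    ⟨hL.card_points, hBcard, fun o ho => (hBovals o ho).1, hBinter⟩
  have hLB : ∀ ℓ ∈ L, ∀ o ∈ B, #(ℓ ∩ o) ≤ 2 := fun ℓ hℓ o ho => (hBovals o ho).2 ℓ hℓ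
  rcases Nat.even_or_odd #L' with hr | hr
  · have hsum : Odd (#L' + #O') := hcard ▸ hodd.add_even even_two
    have hs : Odd #O' := (Nat.odd_add'.mp hsum).mpr hr
    obtain ⟨hs1, hr1, o, rfl, hL'eq⟩ := card_eq_one_and_eq_filter_of_odd hq hBdesign hLdesign
      (fun o ho ℓ hℓ => inter_comm ℓ o ▸ hLB ℓ hℓ o ho) hO' hL' (by omega)
      (fun p => add_comm (#(L'.filter (p ∈ ·))) _ ▸ heven p) hs
    exact Or.inr ⟨hr1, hs1, o, rfl, hL'eq⟩
  · exact Or.inl (card_eq_one_and_eq_filter_of_odd hq hLdesign hBdesign hLB hL' hO' hcard heven hr)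
end

section
/- Let q ≥ 2 be odd, let (P, L) be a finite projective plane of order q, let B be a projective bundle, and let ℓ ∈ L be any line. Then the configuration consisting of ℓ together with the q+1 ovals of B tangent to ℓ covers every point of P exactly 0 or exactly 2 times; in particular, every point belongs to an even number of its members, so the binary code with parity-check matrix (A | M) (A the point-line incidence matrix, M the point-oval incidence matrix over F₂) contains a codeword of Hamming weight exactly q+2, and its minimum distance equals q+2. -/
open Finset
open scoped Matrix

/-!
The lines `L` and the ovals of the bundle `B` form two projective planes of order `q` on the
same points (for `B` by a variance count), each member of one being an oval of the other.
Through a point of an oval `K` passes exactly one tangent of `K`, and through a point off `K` an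
even number, since the members through it meet `K` in `q + 1` points altogether. Comparing
`∑ t` and `∑ t ^ 2` for these even tangent counts `t` over the points off `K` forces
`t ∈ {0, 2}`, so `ℓ` and its `q + 1` tangent ovals form a codeword of weight `q + 2`.

A codeword is a pair `S ⊆ L`, `U ⊆ B` covering every point an even number of times. Summing
this condition over the points of a line `m` shows that the number of ovals of `U` tangent to
`m` has the parity of `#(S.erase m)`, and dually. Two ovals have exactly one common tangent: an
odd number by a parity count, and one on average. If `#S` is odd, every line outside `S` is
tangent to an oval of `U`, so `q ^ 2 + q + 1 ≤ #S + #U * (q + 1)`; together with the dual bound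
this rules out `#S + #U ≤ q + 1`. If `#S` is even and `m ∈ S`, some oval `o ∈ U` is tangent to
`m`, and each of the `q + 1` tangents of `o` lies in `S` or is the common tangent of `o` with
another oval of `U`, so `q + 1 ≤ #S + #U - 1`.
-/

section Counting

variable {α β : Type*}

theorem sum_card_filter_comm (s : Finset α) (t : Finset β) (r : α → β → Prop)
    [∀ a b, Decidable (r a b)] :
    ∑ a ∈ s, #{b ∈ t | r a b} = ∑ b ∈ t, #{a ∈ s | r a b} :=
  sum_card_bipartiteAbove_eq_sum_card_bipartiteBelow r

theorem eq_of_sum_eq_of_sum_sq_eq {s : Finset α} {f : α → ℕ} {m : ℕ}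
    (h₁ : ∑ a ∈ s, f a = #s * m) (h₂ : ∑ a ∈ s, f a ^ 2 = #s * m ^ 2) :
    ∀ a ∈ s, f a = m := by
  have hsum : ∑ a ∈ s, 2 * m * f a = ∑ a ∈ s, (f a ^ 2 + m ^ 2) := by
    rw [← mul_sum, sum_add_distrib, h₁, h₂, sum_const, smul_eq_mul]
    ring
  intro a ha
  have hf := (sum_eq_sum_iff_of_le fun a _ => two_mul_le_add_sq m (f a) |>.trans_eq
    (add_comm _ _)).1 hsum a ha
  nlinarith [sq_nonneg ((f a : ℤ) - m)]

theorem eq_zero_or_eq_two_of_sum_sq_eq {s : Finset α} {f : α → ℕ}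
    (heven : ∀ a ∈ s, Even (f a)) (h : ∑ a ∈ s, f a ^ 2 = ∑ a ∈ s, 2 * f a) :
    ∀ a ∈ s, f a = 0 ∨ f a = 2 := by
  have hle : ∀ a ∈ s, 2 * f a ≤ f a ^ 2 := by
    intro a ha
    obtain ⟨k, hk⟩ := heven a ha
    rcases k with _ | k <;> rw [hk] <;> nlinarith
  intro a ha
  have hsq := (sum_eq_sum_iff_of_le hle).1 h.symm a ha
  obtain ⟨k, hk⟩ := heven a ha
  rw [hk] at hsq ⊢
  have : k ≤ 1 := by nlinarith
  omega

end Counting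

theorem hammingNorm_sumElim {α β γ : Type*} [Fintype α] [Fintype β] [Zero γ]
    [DecidableEq γ] (y : α → γ) (z : β → γ) :
    hammingNorm (Sum.elim y z) = hammingNorm y + hammingNorm z := by
  simp only [hammingNorm, card_filter, Fintype.sum_sum_type, Sum.elim_inl, Sum.elim_inr]
  rfl

variable {P : Type}

section Support

variable {F : Finset (Finset P)}

def memberSupport (y : F → ZMod 2) : Finset (Finset P) :=
  ({c | y c ≠ 0} : Finset F).map (Function.Embedding.subtype (· ∈ F))

theorem memberSupport_subset (y : F → ZMod 2) : memberSupport y ⊆ F := by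
  intro c hc
  obtain ⟨c', -, rfl⟩ := mem_map.1 hc
  exact c'.2

theorem card_memberSupport (y : F → ZMod 2) : #(memberSupport y) = hammingNorm y :=
  card_map _

theorem memberSupport_eq_empty {y : F → ZMod 2} : memberSupport y = ∅ ↔ y = 0 := by
  simp [memberSupport, filter_eq_empty_iff, funext_iff]

end Support

variable [DecidableEq P]

structure IsPlaneDesign (q : ℕ) (C : Finset (Finset P)) : Prop where
  card_filter_mem : ∀ p : P, #{c ∈ C | p ∈ c} = q + 1
  card_filter_mem_mem : ∀ x y : P, x ≠ y → #{c ∈ C | x ∈ c ∧ y ∈ c} = 1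
  card_of_mem : ∀ c ∈ C, #c = q + 1
  card_inter : ∀ c ∈ C, ∀ c' ∈ C, c ≠ c' → #(c ∩ c') = 1

def tangents (C : Finset (Finset P)) (K : Finset P) : Finset (Finset P) :=
  {c ∈ C | #(c ∩ K) = 1}

section Tangents

variable {q : ℕ} {C D F : Finset (Finset P)} {K : Finset P} {p : P}

theorem IsPlaneDesign.isOval (hD : IsPlaneDesign q D) (hCD : ∀ c ∈ C, ∀ d ∈ D, #(c ∩ d) ≤ 2)
    {d : Finset P} (hd : d ∈ D) : IsOval q C d :=
  ⟨hD.card_of_mem d hd, fun c hc => hCD c hc d hd⟩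

theorem mem_tangents {c : Finset P} : c ∈ tangents C K ↔ c ∈ C ∧ #(c ∩ K) = 1 :=
  mem_filter

theorem filter_tangents_comm (C : Finset (Finset P)) (K : Finset P) (p : P) :
    {c ∈ tangents C K | p ∈ c} = tangents {c ∈ C | p ∈ c} K :=
  filter_comm _ _ _

theorem sum_card_inter_eq_sum_card_filter_mem_s14 (F : Finset (Finset P)) (K : Finset P) :
    ∑ c ∈ F, #(c ∩ K) = ∑ x ∈ K, #{c ∈ F | x ∈ c} := by
  rw [sum_card_filter_comm K F (fun x c => x ∈ c)]
  simp_rw [filter_mem_eq_inter, inter_comm]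

theorem natCast_card_tangents (h : ∀ c ∈ F, #(c ∩ K) ≤ 2) :
    (#(tangents F K) : ZMod 2) = ∑ c ∈ F, (#(c ∩ K) : ZMod 2) := by
  rw [tangents, card_filter, Nat.cast_sum]
  refine sum_congr rfl fun c hc => ?_
  have := h c hc
  interval_cases #(c ∩ K) <;> rfl

theorem card_tangents_add_sum_card_inter (h₁ : ∀ c ∈ F, (c ∩ K).Nonempty)
    (h₂ : ∀ c ∈ F, #(c ∩ K) ≤ 2) : #(tangents F K) + ∑ c ∈ F, #(c ∩ K) = 2 * #F := by
  rw [tangents, card_filter, ← sum_add_distrib, mul_comm, ← smul_eq_mul, ← sum_const]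
  refine sum_congr rfl fun c hc => ?_
  have := (h₁ c hc).card_pos
  have := h₂ c hc
  interval_cases #(c ∩ K) <;> rfl

theorem sum_sq_card_filter_mem (X : Finset P) (F : Finset (Finset P)) :
    ∑ z ∈ X, #{c ∈ F | z ∈ c} ^ 2 = ∑ c ∈ F, ∑ c' ∈ F, #{z ∈ X | z ∈ c ∧ z ∈ c'} := by
  simp_rw [sq, card_filter, sum_mul_sum, ite_zero_mul_ite_zero, mul_one]
  rw [sum_comm]
  exact sum_congr rfl fun c _ => sum_comm

theorem IsPlaneDesign.sum_card_inter_filter_mem (hC : IsPlaneDesign q C) (p : P)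
    (K : Finset P) : ∑ c ∈ {c ∈ C | p ∈ c}, #(c ∩ K) = #K + if p ∈ K then q else 0 := by
  have hterm : ∀ x ∈ K, #{c ∈ {c ∈ C | p ∈ c} | x ∈ c} = 1 + if p = x then q else 0 := by
    intro x _
    rw [filter_filter]
    by_cases hx : p = x
    · simp [hx, hC.card_filter_mem, add_comm]
    · simp [hx, hC.card_filter_mem_mem _ _ hx]
  rw [sum_card_inter_eq_sum_card_filter_mem_s14, sum_congr rfl hterm, sum_add_distrib, sum_ite_eq]
  simp

theorem IsPlaneDesign.card_tangents_filter_mem_of_mem (hC : IsPlaneDesign q C)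
    (hK : IsOval q C K) (hp : p ∈ K) : #{c ∈ tangents C K | p ∈ c} = 1 := by
  have h := card_tangents_add_sum_card_inter (F := {c ∈ C | p ∈ c}) (K := K)
    (fun c hc => ⟨p, mem_inter.2 ⟨(mem_filter.1 hc).2, hp⟩⟩)
    (fun c hc => hK.2 c (mem_filter.1 hc).1)
  rw [hC.sum_card_inter_filter_mem, hK.1, if_pos hp, hC.card_filter_mem] at h
  rw [filter_tangents_comm]
  omega

theorem IsPlaneDesign.card_tangents (hC : IsPlaneDesign q C) (hK : IsOval q C K) :
    #(tangents C K) = q + 1 := by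
  have h := sum_card_inter_eq_sum_card_filter_mem_s14 (tangents C K) K
  rw [sum_congr rfl fun c hc => (mem_tangents.1 hc).2,
    sum_congr rfl fun x hx => hC.card_tangents_filter_mem_of_mem hK hx] at h
  simpa [hK.1] using h

theorem IsPlaneDesign.even_card_tangents_filter_mem (hC : IsPlaneDesign q C)
    (hK : IsOval q C K) (hodd : Odd q) (hp : p ∉ K) : Even #{c ∈ tangents C K | p ∈ c} := by
  rw [← ZMod.natCast_eq_zero_iff_even, filter_tangents_comm,
    natCast_card_tangents fun c hc => hK.2 c (mem_filter.1 hc).1, ← Nat.cast_sum,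
    hC.sum_card_inter_filter_mem, if_neg hp, add_zero, hK.1, ZMod.natCast_eq_zero_iff_even]
  exact hodd.add_one

theorem IsPlaneDesign.disjoint_inter_of_mem_tangents (hC : IsPlaneDesign q C)
    (hK : IsOval q C K) {c c' : Finset P} (hc : c ∈ tangents C K) (hc' : c' ∈ tangents C K)
    (hne : c ≠ c') : Disjoint (c ∩ c') K := by
  rw [disjoint_left]
  intro z hz hzK
  rw [mem_inter] at hz
  exact hne (card_le_one.1 (hC.card_tangents_filter_mem_of_mem hK hzK).le c
    (mem_filter.2 ⟨hc, hz.1⟩) c' (mem_filter.2 ⟨hc', hz.2⟩))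

theorem IsPlaneDesign.odd_card_tangents_tangents (hC : IsPlaneDesign q C) (hodd : Odd q)
    {o o' : Finset P} (ho : IsOval q C o) (ho' : IsOval q C o') (h : #(o ∩ o') = 1) :
    Odd #(tangents (tangents C o) o') := by
  have hterm : ∀ x ∈ o', (#{m ∈ tangents C o | x ∈ m} : ZMod 2) = if x ∈ o then 1 else 0 := by
    intro x _
    by_cases hx : x ∈ o
    · rw [hC.card_tangents_filter_mem_of_mem ho hx, if_pos hx, Nat.cast_one]
    · rw [ZMod.natCast_eq_zero_iff_even.2 (hC.even_card_tangents_filter_mem ho hodd hx),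
        if_neg hx]
  rw [← ZMod.natCast_eq_one_iff_odd,
    natCast_card_tangents fun m hm => ho'.2 m (mem_tangents.1 hm).1, ← Nat.cast_sum,
    sum_card_inter_eq_sum_card_filter_mem_s14, Nat.cast_sum, sum_congr rfl hterm, sum_boole,
    filter_mem_eq_inter, inter_comm, h, Nat.cast_one]

theorem IsPlaneDesign.card_tangents_filter_mem_eq_zero_or_two [Fintype P]
    (hC : IsPlaneDesign q C) (hK : IsOval q C K) (hodd : Odd q) (hp : p ∉ K) :
    #{c ∈ tangents C K | p ∈ c} = 0 ∨ #{c ∈ tangents C K | p ∈ c} = 2 := by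
  set T := tangents C K
  have hout : ∀ c ∈ T, #{z ∈ Kᶜ | z ∈ c} = q := by
    intro c hc
    have := card_inter_add_card_sdiff c K
    rw [(mem_tangents.1 hc).2, hC.card_of_mem c (mem_tangents.1 hc).1] at this
    rw [filter_mem_eq_inter, inter_comm, ← sdiff_eq_inter_compl]
    omega
  have hmeet : ∀ c ∈ T, ∀ c' ∈ T.erase c, #{z ∈ Kᶜ | z ∈ c ∧ z ∈ c'} = 1 := by
    intro c hc c' hc'
    obtain ⟨hne, hc'⟩ := mem_erase.1 hc'
    have hdisj := hC.disjoint_inter_of_mem_tangents hK hc hc' hne.symm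
    rw [← hC.card_inter c (mem_tangents.1 hc).1 c' (mem_tangents.1 hc').1 hne.symm]
    congr 1
    ext z
    simp only [mem_filter, mem_compl, mem_inter]
    exact ⟨And.right, fun hz => ⟨disjoint_left.1 hdisj (mem_inter.2 hz), hz⟩⟩
  have h₁ : ∑ z ∈ Kᶜ, #{c ∈ T | z ∈ c} = (q + 1) * q := by
    rw [sum_card_filter_comm Kᶜ T (fun z c => z ∈ c), sum_congr rfl hout, sum_const,
      smul_eq_mul, hC.card_tangents hK]
  have h₂ : ∑ z ∈ Kᶜ, #{c ∈ T | z ∈ c} ^ 2 = 2 * ((q + 1) * q) := by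
    rw [sum_sq_card_filter_mem]
    have hrow : ∀ c ∈ T, ∑ c' ∈ T, #{z ∈ Kᶜ | z ∈ c ∧ z ∈ c'} = 2 * q := by
      intro c hc
      rw [← add_sum_erase _ _ hc, sum_congr rfl (hmeet c hc), sum_const, smul_eq_mul,
        card_erase_of_mem hc, hC.card_tangents hK]
      simp only [and_self, hout c hc]
      omega
    rw [sum_congr rfl hrow, sum_const, smul_eq_mul, hC.card_tangents hK]
    ring
  exact eq_zero_or_eq_two_of_sum_sq_eq
    (fun z hz => hC.even_card_tangents_filter_mem hK hodd (mem_compl.1 hz))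
    (by rw [h₂, ← mul_sum, h₁]) p (mem_compl.2 hp)

theorem IsPlaneDesign.ite_add_card_tangents_filter_mem_eq_zero_or_two [Fintype P]
    (hC : IsPlaneDesign q C) (hK : IsOval q C K) (hodd : Odd q) (p : P) :
    (if p ∈ K then 1 else 0) + #{c ∈ tangents C K | p ∈ c} = 0 ∨
      (if p ∈ K then 1 else 0) + #{c ∈ tangents C K | p ∈ c} = 2 := by
  by_cases hp : p ∈ K
  · simp [hp, hC.card_tangents_filter_mem_of_mem hK hp]
  · simpa [hp] using hC.card_tangents_filter_mem_eq_zero_or_two hK hodd hp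

end Tangents

def IsEvenCover (S U : Finset (Finset P)) : Prop :=
  ∀ p : P, Even (#{c ∈ S | p ∈ c} + #{c ∈ U | p ∈ c})

section EvenCover

variable {q : ℕ} {C D S U : Finset (Finset P)}

theorem IsEvenCover.symm (h : IsEvenCover S U) : IsEvenCover U S :=
  fun p => add_comm #{c ∈ S | p ∈ c} _ ▸ h p

theorem IsEvenCover.natCast_eq (h : IsEvenCover S U) (p : P) :
    (#{c ∈ S | p ∈ c} : ZMod 2) = #{c ∈ U | p ∈ c} := by
  have := (h p).natCast_zmod_two
  push_cast at this
  exact CharTwo.add_eq_zero.1 this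

theorem IsPlaneDesign.isEvenCover_singleton_tangents [Fintype P] {K : Finset P}
    (hC : IsPlaneDesign q C) (hK : IsOval q C K) (hodd : Odd q) :
    IsEvenCover {K} (tangents C K) := by
  intro p
  have hsingle : #{c ∈ ({K} : Finset (Finset P)) | p ∈ c} = if p ∈ K then 1 else 0 := by
    rw [filter_singleton]
    split_ifs <;> rfl
  rcases hC.ite_add_card_tangents_filter_mem_eq_zero_or_two hK hodd p with h | h <;>
    rw [hsingle, h] <;> decide

theorem IsPlaneDesign.natCast_card_tangents_of_isEvenCover (hD : IsPlaneDesign q D)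
    (hodd : Odd q) (hcov : IsEvenCover S U) (hU : U ⊆ D) {d : Finset P} (hd : d ∈ D)
    (hS : ∀ c ∈ S, #(c ∩ d) ≤ 2) : (#(tangents S d) : ZMod 2) = #(U.erase d) := by
  -- sum the cover condition over the points of `d`: the members of `U.erase d` meet `d` once,
  -- and `d` itself contributes `q + 1 ≡ 0`
  have hmeet : ∀ u ∈ U.erase d, #(u ∩ d) = 1 := fun u hu =>
    hD.card_inter u (hU (mem_of_mem_erase hu)) d hd (ne_of_mem_erase hu)
  rw [natCast_card_tangents hS, ← Nat.cast_sum, sum_card_inter_eq_sum_card_filter_mem_s14,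
    Nat.cast_sum, sum_congr rfl fun p _ => hcov.natCast_eq p, ← Nat.cast_sum,
    ← sum_card_inter_eq_sum_card_filter_mem_s14]
  by_cases hdU : d ∈ U
  · rw [← add_sum_erase _ _ hdU, inter_self, hD.card_of_mem d hd, sum_congr rfl hmeet,
      sum_const, smul_eq_mul, mul_one, Nat.cast_add, hodd.add_one.natCast_zmod_two, zero_add]
  · rw [sum_congr rfl fun u hu => hD.card_inter u (hU hu) d hd fun h => hdU (h ▸ hu),
      sum_const, smul_eq_mul, mul_one, erase_eq_of_notMem hdU]

theorem IsPlaneDesign.card_le_card_add_card_mul_of_odd (hC : IsPlaneDesign q C)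
    (hodd : Odd q) (hS : S ⊆ C) (hU : ∀ u ∈ U, IsOval q C u) (hcov : IsEvenCover S U)
    (hSodd : Odd #S) : #C ≤ #S + #U * (q + 1) := by
  have hcover : C ⊆ S ∪ U.biUnion (tangents C) := by
    intro m hm
    by_cases hmS : m ∈ S
    · exact mem_union_left _ hmS
    have h := hC.natCast_card_tangents_of_isEvenCover hodd hcov.symm hS hm
      fun u hu => inter_comm m u ▸ (hU u hu).2 m hm
    rw [erase_eq_of_notMem hmS, ZMod.natCast_eq_one_iff_odd.2 hSodd,
      ZMod.natCast_eq_one_iff_odd] at h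
    obtain ⟨u, hu⟩ := card_pos.1 h.pos
    obtain ⟨huU, hum⟩ := mem_tangents.1 hu
    exact mem_union_right _ (mem_biUnion.2 ⟨u, huU, mem_tangents.2 ⟨hm, inter_comm u m ▸ hum⟩⟩)
  calc #C ≤ #S + #(U.biUnion (tangents C)) := (card_le_card hcover).trans (card_union_le _ _)
    _ ≤ #S + ∑ u ∈ U, #(tangents C u) := by gcongr; exact card_biUnion_le
    _ = #S + #U * (q + 1) := by
      rw [sum_congr rfl fun u hu => hC.card_tangents (hU u hu), sum_const, smul_eq_mul]

end EvenCover

section CardPoints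

variable [Fintype P] {q : ℕ} {C D : Finset (Finset P)}

theorem sum_card_filter_mem_mem_erase (F : Finset (Finset P)) (x : P) :
    ∑ y ∈ univ.erase x, #{c ∈ F | x ∈ c ∧ y ∈ c} = ∑ c ∈ {c ∈ F | x ∈ c}, #(c.erase x) := by
  simp_rw [← filter_filter]
  rw [sum_card_filter_comm (univ.erase x) {c ∈ F | x ∈ c} (fun y c => y ∈ c)]
  refine sum_congr rfl fun c _ => congrArg card ?_
  ext y
  simp [and_comm]

theorem IsPlaneDesign.card_points [Nonempty P] (hC : IsPlaneDesign q C) :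
    Fintype.card P = q ^ 2 + q + 1 := by
  obtain ⟨x⟩ := ‹Nonempty P›
  have hline : ∀ c ∈ {c ∈ C | x ∈ c}, #(c.erase x) = q := fun c hc => by
    rw [card_erase_of_mem (mem_filter.1 hc).2, hC.card_of_mem c (mem_filter.1 hc).1,
      add_tsub_cancel_right]
  have h := sum_card_filter_mem_mem_erase C x
  rw [sum_congr rfl fun y hy => hC.card_filter_mem_mem x y (ne_of_mem_erase hy).symm,
    sum_congr rfl hline, sum_const, sum_const, card_erase_of_mem (mem_univ x), card_univ,
    hC.card_filter_mem, smul_eq_mul, smul_eq_mul, mul_one] at h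
  have := Fintype.card_pos (α := P)
  rw [← Nat.sub_add_cancel this, h]
  ring

theorem IsPlaneDesign.card_eq [Nonempty P] (hC : IsPlaneDesign q C) : #C = q ^ 2 + q + 1 := by
  have h := sum_card_filter_comm C univ (fun c p => p ∈ c)
  simp_rw [filter_mem_eq_inter, univ_inter] at h
  rw [sum_congr rfl hC.card_of_mem, sum_congr rfl fun p _ => hC.card_filter_mem p, sum_const,
    sum_const, card_univ, hC.card_points, smul_eq_mul, smul_eq_mul] at h
  exact Nat.eq_of_mul_eq_mul_right q.succ_pos h

theorem IsPlaneDesign.card_tangents_tangents [Nonempty P] (hC : IsPlaneDesign q C)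
    (hD : IsPlaneDesign q D) (hCD : ∀ c ∈ C, ∀ d ∈ D, #(c ∩ d) ≤ 2) (hodd : Odd q)
    {o o' : Finset P} (ho : o ∈ D) (ho' : o' ∈ D) (hne : o ≠ o') :
    #(tangents (tangents C o) o') = 1 := by
  have hoval : ∀ d ∈ D, IsOval q C d := fun d hd => hD.isOval hCD hd
  have hpos : ∀ d ∈ D.erase o, 1 ≤ #(tangents (tangents C o) d) := fun d hd =>
    (hC.odd_card_tangents_tangents hodd (hoval o ho) (hoval d (mem_of_mem_erase hd))
      (hD.card_inter o ho d (mem_of_mem_erase hd) (ne_of_mem_erase hd).symm)).pos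
  -- each of the `q + 1` tangents of `o` is tangent to `q` further ovals, so these odd counts
  -- average to one over the `q ^ 2 + q` ovals other than `o`
  have hsum : ∑ d ∈ D.erase o, #(tangents (tangents C o) d) = ∑ d ∈ D.erase o, 1 := by
    have hterm : ∀ m ∈ tangents C o, #{d ∈ D.erase o | #(m ∩ d) = 1} = q := by
      intro m hm
      obtain ⟨hmC, hmo⟩ := mem_tangents.1 hm
      have hmD : IsOval q D m :=
        ⟨hC.card_of_mem m hmC, fun d hd => inter_comm d m ▸ hCD m hmC d hd⟩
      have hot : o ∈ tangents D m := mem_tangents.2 ⟨ho, inter_comm o m ▸ hmo⟩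
      have hDm : {d ∈ D | #(m ∩ d) = 1} = tangents D m :=
        filter_congr fun d _ => by rw [inter_comm]
      rw [filter_erase, hDm, card_erase_of_mem hot, hD.card_tangents hmD, add_tsub_cancel_right]
    calc _ = ∑ m ∈ tangents C o, #{d ∈ D.erase o | #(m ∩ d) = 1} :=
          (sum_card_filter_comm _ _ _).symm
      _ = ∑ d ∈ D.erase o, 1 := by
          rw [sum_congr rfl hterm, sum_const, sum_const, hC.card_tangents (hoval o ho),
            card_erase_of_mem ho, hD.card_eq, smul_eq_mul, smul_eq_mul, add_tsub_cancel_right,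
            mul_one]
          ring
  exact ((sum_eq_sum_iff_of_le hpos).1 hsum.symm o' (mem_erase.2 ⟨hne.symm, ho'⟩)).symm

end CardPoints

section MinimumWeight

variable [Fintype P] [Nonempty P] {q : ℕ} {C D S U : Finset (Finset P)}

theorem IsPlaneDesign.le_card_add_card_of_odd (hC : IsPlaneDesign q C)
    (hD : IsPlaneDesign q D) (hCD : ∀ c ∈ C, ∀ d ∈ D, #(c ∩ d) ≤ 2) (hodd : Odd q)
    (hq : 2 ≤ q) (hS : S ⊆ C) (hU : U ⊆ D) (hcov : IsEvenCover S U) (hSodd : Odd #S) :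
    q + 2 ≤ #S + #U := by
  have hDC : ∀ d ∈ D, ∀ c ∈ C, #(d ∩ c) ≤ 2 := fun d hd c hc => inter_comm c d ▸ hCD c hc d hd
  by_contra! h
  have h₁ := hC.card_le_card_add_card_mul_of_odd hodd hS (fun u hu => hD.isOval hCD (hU hu))
    hcov hSodd
  rw [hC.card_eq] at h₁
  -- `q ^ 2 + q + 1 ≤ #S + #U * (q + 1)` and `#S + #U ≤ q + 1` force `#S = 1`, `#U = q`
  have hUq : #U = q := by nlinarith [hSodd.pos]
  have h₂ := hD.card_le_card_add_card_mul_of_odd hodd hU (fun s hs => hC.isOval hDC (hS hs))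
    hcov.symm (hUq ▸ hodd)
  rw [hD.card_eq] at h₂
  nlinarith

theorem IsPlaneDesign.le_card_add_card_of_even (hC : IsPlaneDesign q C)
    (hD : IsPlaneDesign q D) (hCD : ∀ c ∈ C, ∀ d ∈ D, #(c ∩ d) ≤ 2) (hodd : Odd q)
    (hS : S ⊆ C) (hU : U ⊆ D) (hcov : IsEvenCover S U) (hSeven : Even #S)
    (hSne : S.Nonempty) : q + 2 ≤ #S + #U := by
  have hpar : ∀ m ∈ C, (#(tangents U m) : ZMod 2) = #(S.erase m) := fun m hm =>
    hC.natCast_card_tangents_of_isEvenCover hodd hcov.symm hS hm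
      fun u hu => inter_comm m u ▸ hCD m hm u (hU hu)
  obtain ⟨m₁, hm₁⟩ := hSne
  have hodd₁ : Odd #(S.erase m₁) := by
    rw [card_erase_of_mem hm₁]
    exact Nat.Even.sub_odd (card_pos.2 ⟨m₁, hm₁⟩) hSeven odd_one
  have h₁ := hpar m₁ (hS hm₁)
  rw [ZMod.natCast_eq_one_iff_odd.2 hodd₁, ZMod.natCast_eq_one_iff_odd] at h₁
  obtain ⟨o₀, ho₀⟩ := card_pos.1 h₁.pos
  obtain ⟨ho₀U, ho₀m⟩ := mem_tangents.1 ho₀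
  have ho₀ : IsOval q C o₀ := hD.isOval hCD (hU ho₀U)
  -- a tangent of `o₀` outside `S` is tangent to an even number of ovals of `U`, hence to another
  have hsub : tangents C o₀ ⊆ S ∪ (U.erase o₀).biUnion (tangents (tangents C o₀)) := by
    intro m hm
    obtain ⟨hmC, hmo⟩ := mem_tangents.1 hm
    by_cases hmS : m ∈ S
    · exact mem_union_left _ hmS
    have h := hpar m hmC
    rw [erase_eq_of_notMem hmS, hSeven.natCast_zmod_two, ZMod.natCast_eq_zero_iff_even] at h
    have hom : o₀ ∈ tangents U m := mem_tangents.2 ⟨ho₀U, inter_comm o₀ m ▸ hmo⟩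
    have htwo : 1 < #(tangents U m) := by
      obtain ⟨k, hk⟩ := h
      have := card_pos.2 ⟨o₀, hom⟩
      omega
    obtain ⟨o', ho', hne⟩ := exists_mem_ne htwo o₀
    obtain ⟨ho'U, ho'm⟩ := mem_tangents.1 ho'
    exact mem_union_right _ (mem_biUnion.2 ⟨o', mem_erase.2 ⟨hne, ho'U⟩,
      mem_tangents.2 ⟨hm, inter_comm o' m ▸ ho'm⟩⟩)
  have hU1 := card_pos.2 ⟨o₀, ho₀U⟩
  have := calc q + 1 = #(tangents C o₀) := (hC.card_tangents ho₀).symm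
    _ ≤ #S + #((U.erase o₀).biUnion (tangents (tangents C o₀))) :=
      (card_le_card hsub).trans (card_union_le _ _)
    _ ≤ #S + ∑ o' ∈ U.erase o₀, #(tangents (tangents C o₀) o') := by
      gcongr; exact card_biUnion_le
    _ = #S + (#U - 1) := by
      rw [sum_congr rfl fun o' ho' => hC.card_tangents_tangents hD hCD hodd (hU ho₀U)
        (hU (mem_of_mem_erase ho')) (ne_of_mem_erase ho').symm, sum_const, smul_eq_mul,
        mul_one, card_erase_of_mem ho₀U]
  omega

theorem IsPlaneDesign.le_card_add_card_of_isEvenCover (hC : IsPlaneDesign q C)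
    (hD : IsPlaneDesign q D) (hCD : ∀ c ∈ C, ∀ d ∈ D, #(c ∩ d) ≤ 2) (hodd : Odd q)
    (hq : 2 ≤ q) (hS : S ⊆ C) (hU : U ⊆ D) (hcov : IsEvenCover S U)
    (hne : S.Nonempty ∨ U.Nonempty) : q + 2 ≤ #S + #U := by
  have hDC : ∀ d ∈ D, ∀ c ∈ C, #(d ∩ c) ≤ 2 := fun d hd c hc => inter_comm c d ▸ hCD c hc d hd
  rcases Nat.even_or_odd #S with hSe | hSo
  · rcases Nat.even_or_odd #U with hUe | hUo
    · rcases hne with hSne | hUne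
      · exact hC.le_card_add_card_of_even hD hCD hodd hS hU hcov hSe hSne
      · rw [add_comm #S]
        exact hD.le_card_add_card_of_even hC hDC hodd hU hS hcov.symm hUe hUne
    · rw [add_comm #S]
      exact hD.le_card_add_card_of_odd hC hDC hodd hq hU hS hcov.symm hUo
  · exact hC.le_card_add_card_of_odd hD hCD hodd hq hS hU hcov hSo

end MinimumWeight

section Plane

variable {q : ℕ} {L B : Finset (Finset P)}

theorem IsProjectivePlane.nonempty (hL : IsProjectivePlane q L) : Nonempty P :=
  let ⟨a, _⟩ := hL.nondeg
  ⟨a⟩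

theorem IsProjectivePlane.card_inter_s14 (hL : IsProjectivePlane q L) {m m' : Finset P}
    (hm : m ∈ L) (hm' : m' ∈ L) (hne : m ≠ m') : #(m ∩ m') = 1 := by
  rw [card_eq_one_iff_existsUnique]
  simpa only [mem_inter] using hL.exists_unique_point m hm m' hm' hne

theorem IsProjectivePlane.card_filter_mem_mem_s14 (hL : IsProjectivePlane q L) {x y : P}
    (hne : x ≠ y) : #{m ∈ L | x ∈ m ∧ y ∈ m} = 1 := by
  rw [card_eq_one_iff_existsUnique]
  simpa only [mem_filter, and_assoc] using hL.exists_unique_line x y hne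

theorem IsProjectivePlane.exists_not_mem (hL : IsProjectivePlane q L) (p : P) :
    ∃ m ∈ L, p ∉ m := by
  obtain ⟨a, b, c, d, hab, hac, -, hbc, -, -, hquad⟩ := hL.nondeg
  have hncol : ∀ m ∈ L, ¬(a ∈ m ∧ b ∈ m ∧ c ∈ m) := by
    rintro m hm ⟨ha, hb, hc⟩
    have hsub : ({a, b, c} : Finset P) ⊆ m ∩ {a, b, c, d} := by
      intro x hx
      simp only [mem_insert, mem_singleton] at hx
      rcases hx with rfl | rfl | rfl <;> simp [*]
    have := card_le_card hsub
    rw [card_eq_three.2 ⟨a, b, c, hab, hac, hbc, rfl⟩] at this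
    exact absurd (hquad m hm) (by omega)
  -- a point on every line would be the meet of `mab` and `mac`, that is `a`, and likewise `b`
  by_contra! h
  obtain ⟨mab, ⟨hmab, ha, hb⟩, -⟩ := hL.exists_unique_line a b hab
  obtain ⟨mac, ⟨hmac, ha', hc⟩, -⟩ := hL.exists_unique_line a c hac
  obtain ⟨mbc, ⟨hmbc, hb', hc'⟩, -⟩ := hL.exists_unique_line b c hbc
  have hpa : p = a := (hL.exists_unique_point mab hmab mac hmac (by
    rintro rfl; exact hncol mab hmab ⟨ha, hb, hc⟩)).unique ⟨h mab hmab, h mac hmac⟩ ⟨ha, ha'⟩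
  have hpb : p = b := (hL.exists_unique_point mab hmab mbc hmbc (by
    rintro rfl; exact hncol mab hmab ⟨ha, hb, hc'⟩)).unique ⟨h mab hmab, h mbc hmbc⟩ ⟨hb, hb'⟩
  exact hab (hpa.symm.trans hpb)

theorem IsProjectivePlane.card_filter_mem_s14 (hL : IsProjectivePlane q L) (p : P) :
    #{m ∈ L | p ∈ m} = q + 1 := by
  obtain ⟨m₀, hm₀, hp⟩ := hL.exists_not_mem p
  -- each line through `p` meets `m₀` once, and each point of `m₀` is joined to `p` once
  have hjoin : ∀ x ∈ m₀, #{m ∈ {m ∈ L | p ∈ m} | x ∈ m} = 1 := fun x hx => by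
    rw [filter_filter]
    exact hL.card_filter_mem_mem_s14 fun h => hp (h ▸ hx)
  have h := sum_card_inter_eq_sum_card_filter_mem_s14 {m ∈ L | p ∈ m} m₀
  rw [sum_congr rfl fun m hm => hL.card_inter_s14 (mem_filter.1 hm).1 hm₀
      (by rintro rfl; exact hp (mem_filter.1 hm).2),
    sum_congr rfl hjoin, sum_const, sum_const, hL.card_line m₀ hm₀] at h
  simpa using h

theorem IsProjectivePlane.isPlaneDesign (hL : IsProjectivePlane q L) : IsPlaneDesign q L :=
  ⟨hL.card_filter_mem_s14, fun _ _ => hL.card_filter_mem_mem_s14, hL.card_line,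
    fun _ hm _ hm' => hL.card_inter_s14 hm hm'⟩

variable [Fintype P]

theorem IsProjectiveBundle.card_filter_mem_s14 (hB : IsProjectiveBundle q L B)
    (hP : Fintype.card P = q ^ 2 + q + 1) (p : P) : #{o ∈ B | p ∈ o} = q + 1 := by
  have hmeet : ∀ o o' : Finset P, {z ∈ (univ : Finset P) | z ∈ o ∧ z ∈ o'} = o ∩ o' :=
    fun _ _ => by ext; simp
  have h₁ : ∑ z, #{o ∈ B | z ∈ o} = #(univ : Finset P) * (q + 1) := by
    rw [sum_card_filter_comm univ B (fun z o => z ∈ o)]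
    simp_rw [filter_mem_eq_inter, univ_inter]
    rw [sum_congr rfl fun o ho => (hB.2.1 o ho).1, sum_const, smul_eq_mul, card_univ, hP, hB.1]
  have h₂ : ∑ z, #{o ∈ B | z ∈ o} ^ 2 = #(univ : Finset P) * (q + 1) ^ 2 := by
    have hrow : ∀ o ∈ B,
        ∑ o' ∈ B, #{z ∈ (univ : Finset P) | z ∈ o ∧ z ∈ o'} = q + 1 + q ^ 2 + q := by
      intro o ho
      rw [← add_sum_erase _ _ ho]
      simp only [hmeet, inter_self]
      rw [(hB.2.1 o ho).1, sum_congr rfl fun o' ho' => hB.2.2 o ho o' (mem_of_mem_erase ho')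
        (ne_of_mem_erase ho').symm, sum_const, card_erase_of_mem ho, hB.1, smul_eq_mul, mul_one,
        add_tsub_cancel_right]
      ring
    rw [sum_sq_card_filter_mem, sum_congr rfl hrow, sum_const, smul_eq_mul, card_univ, hP, hB.1]
    ring
  exact eq_of_sum_eq_of_sum_sq_eq h₁ h₂ p (mem_univ p)

theorem IsProjectiveBundle.card_filter_mem_mem_s14 (hB : IsProjectiveBundle q L B)
    (hP : Fintype.card P = q ^ 2 + q + 1) {x y : P} (hxy : x ≠ y) :
    #{o ∈ B | x ∈ o ∧ y ∈ o} = 1 := by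
  have hle : ∀ y ∈ univ.erase x, #{o ∈ B | x ∈ o ∧ y ∈ o} ≤ 1 := by
    intro y hy
    have hxy := ne_of_mem_erase hy
    rw [card_le_one]
    intro o ho o' ho'
    by_contra hne
    obtain ⟨hoB, hxo, hyo⟩ := mem_filter.1 ho
    obtain ⟨ho'B, hxo', hyo'⟩ := mem_filter.1 ho'
    obtain ⟨z, hz⟩ := card_eq_one.1 (hB.2.2 o hoB o' ho'B hne)
    have hx : x ∈ o ∩ o' := mem_inter.2 ⟨hxo, hxo'⟩
    have hy : y ∈ o ∩ o' := mem_inter.2 ⟨hyo, hyo'⟩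
    rw [hz, mem_singleton] at hx hy
    exact hxy (hy.trans hx.symm)
  have hsum : ∑ y ∈ univ.erase x, #{o ∈ B | x ∈ o ∧ y ∈ o} = ∑ y ∈ univ.erase x, 1 := by
    rw [sum_card_filter_mem_mem_erase, sum_congr rfl fun o ho => by
      rw [card_erase_of_mem (mem_filter.1 ho).2, (hB.2.1 o (mem_filter.1 ho).1).1],
      sum_const, sum_const, hB.card_filter_mem_s14 hP x, card_erase_of_mem (mem_univ x), card_univ,
      hP, smul_eq_mul, smul_eq_mul]
    simp only [add_tsub_cancel_right, mul_one]
    ring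
  exact (sum_eq_sum_iff_of_le hle).1 hsum y (mem_erase.2 ⟨hxy.symm, mem_univ y⟩)

theorem IsProjectiveBundle.isPlaneDesign (hB : IsProjectiveBundle q L B)
    (hP : Fintype.card P = q ^ 2 + q + 1) : IsPlaneDesign q B :=
  ⟨hB.card_filter_mem_s14 hP, fun _ _ => hB.card_filter_mem_mem_s14 hP, fun o ho => (hB.2.1 o ho).1,
    hB.2.2⟩

end Plane

section Code

variable {F : Finset (Finset P)}

theorem memberSupport_ite {S : Finset (Finset P)} (hS : S ⊆ F) :
    memberSupport (fun c : F => if c.1 ∈ S then (1 : ZMod 2) else 0) = S := by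
  ext c
  simpa [memberSupport] using fun h => hS h

def incidenceMatrix (F : Finset (Finset P)) : Matrix P F (ZMod 2) :=
  Matrix.of fun p c => if p ∈ c.1 then 1 else 0

theorem incidenceMatrix_mulVec (y : F → ZMod 2) (p : P) :
    (incidenceMatrix F *ᵥ y) p = #{c ∈ memberSupport y | p ∈ c} := by
  rw [memberSupport, filter_map, card_map, filter_filter, card_filter, Nat.cast_sum]
  refine sum_congr rfl fun c _ => ?_
  simp only [incidenceMatrix, Matrix.of_apply, Function.comp_apply,
    Function.Embedding.coe_subtype]
  rcases (by decide : ∀ v : ZMod 2, v = 0 ∨ v = 1) (y c) with h | h <;>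
    by_cases hp : p ∈ c.1 <;> simp [h, hp]

theorem fromCols_incidenceMatrix_mulVec_sumElim_eq_zero_iff {L B : Finset (Finset P)}
    (y : L → ZMod 2) (z : B → ZMod 2) :
    Matrix.fromCols (incidenceMatrix L) (incidenceMatrix B) *ᵥ Sum.elim y z = 0 ↔
      IsEvenCover (memberSupport y) (memberSupport z) := by
  simp only [Matrix.fromCols_mulVec_sumElim, funext_iff, Pi.add_apply, incidenceMatrix_mulVec,
    Pi.zero_apply, ← Nat.cast_add, ZMod.natCast_eq_zero_iff_even]
  rfl

theorem exists_mulVec_eq_zero_of_isEvenCover {L B S U : Finset (Finset P)} (hS : S ⊆ L)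
    (hU : U ⊆ B) (h : IsEvenCover S U) :
    ∃ x : L ⊕ B → ZMod 2, Matrix.fromCols (incidenceMatrix L) (incidenceMatrix B) *ᵥ x = 0 ∧
      hammingNorm x = #S + #U := by
  refine ⟨Sum.elim (fun c => if c.1 ∈ S then 1 else 0) (fun c => if c.1 ∈ U then 1 else 0),
    ?_, ?_⟩
  · rwa [fromCols_incidenceMatrix_mulVec_sumElim_eq_zero_iff, memberSupport_ite hS,
      memberSupport_ite hU]
  · rw [hammingNorm_sumElim, ← card_memberSupport, ← card_memberSupport, memberSupport_ite hS,
      memberSupport_ite hU]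

theorem IsPlaneDesign.add_two_le_hammingNorm [Fintype P] [Nonempty P] {q : ℕ}
    {C D : Finset (Finset P)} (hC : IsPlaneDesign q C) (hD : IsPlaneDesign q D)
    (hCD : ∀ c ∈ C, ∀ d ∈ D, #(c ∩ d) ≤ 2) (hodd : Odd q) (hq : 2 ≤ q)
    {x : C ⊕ D → ZMod 2} (hx : x ≠ 0)
    (hker : Matrix.fromCols (incidenceMatrix C) (incidenceMatrix D) *ᵥ x = 0) :
    q + 2 ≤ hammingNorm x := by
  obtain ⟨y, z, rfl⟩ : ∃ y z, x = Sum.elim y z := ⟨_, _, (Sum.elim_comp_inl_inr x).symm⟩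
  rw [fromCols_incidenceMatrix_mulVec_sumElim_eq_zero_iff] at hker
  rw [hammingNorm_sumElim, ← card_memberSupport, ← card_memberSupport]
  refine hC.le_card_add_card_of_isEvenCover hD hCD hodd hq (memberSupport_subset y)
    (memberSupport_subset z) hker ?_
  simp only [nonempty_iff_ne_empty, ne_eq, memberSupport_eq_empty, ← not_and_or]
  rintro ⟨rfl, rfl⟩
  exact hx Sum.elim_zero_zero

end Code

/-- For `q ≥ 2` odd, a projective bundle `B` and any line `ℓ ∈ L`, the
configuration consisting of `ℓ` together with the `q + 1` ovals of `B` tangent to `ℓ`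
covers every point exactly 0 or exactly 2 times; in particular the binary code with
parity-check matrix `H = (A | M)` contains a codeword of Hamming weight exactly `q + 2`,
and its minimum distance equals `q + 2`. -/
theorem statement_14 (q : ℕ) (hq : 2 ≤ q) (hodd : Odd q) (P : Type) [Fintype P] [DecidableEq P]
    (L : Finset (Finset P)) (hL : IsProjectivePlane q L)
    (B : Finset (Finset P)) (hB : IsProjectiveBundle q L B)
    (ℓ : Finset P) (hℓ : ℓ ∈ L) :
    let T : Finset (Finset P) := B.filter fun o => (o ∩ ℓ).card = 1
    let H : Matrix P ({m // m ∈ L} ⊕ {o // o ∈ B}) (ZMod 2) :=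
      Matrix.of fun p c =>
        Sum.elim (fun m : {m // m ∈ L} => if p ∈ m.1 then (1 : ZMod 2) else 0)
          (fun o : {o // o ∈ B} => if p ∈ o.1 then 1 else 0) c
    (∀ p : P,
      (if p ∈ ℓ then 1 else 0) + (T.filter fun o => p ∈ o).card = 0 ∨
      (if p ∈ ℓ then 1 else 0) + (T.filter fun o => p ∈ o).card = 2) ∧
    (∃ x : ({m // m ∈ L} ⊕ {o // o ∈ B}) → ZMod 2,
      H.mulVec x = 0 ∧ hammingNorm x = q + 2) ∧
    (∀ x : ({m // m ∈ L} ⊕ {o // o ∈ B}) → ZMod 2,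
      x ≠ 0 → H.mulVec x = 0 → q + 2 ≤ hammingNorm x) := by
  intro T H
  have : Nonempty P := hL.nonempty
  have hLd := hL.isPlaneDesign
  have hBd := hB.isPlaneDesign hLd.card_points
  have hLB : ∀ m ∈ L, ∀ o ∈ B, #(m ∩ o) ≤ 2 := fun m hm o ho => (hB.2.1 o ho).2 m hm
  have hℓB : IsOval q B ℓ := ⟨hL.card_line ℓ hℓ, fun o ho => inter_comm ℓ o ▸ hLB ℓ hℓ o ho⟩
  obtain ⟨x, hx, hwt⟩ := exists_mulVec_eq_zero_of_isEvenCover (U := tangents B ℓ)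
    (singleton_subset_iff.2 hℓ) (filter_subset _ B) (hBd.isEvenCover_singleton_tangents hℓB hodd)
  refine ⟨hBd.ite_add_card_tangents_filter_mem_eq_zero_or_two hℓB hodd, ⟨x, hx, ?_⟩,
    fun x hx hker => hLd.add_two_le_hammingNorm hBd hLB hodd hq hx hker⟩
  rw [hwt, card_singleton, hBd.card_tangents hℓB]
  ring
end

section
/- Let q ≥ 1 and let H be a binary matrix with q²+q+1 rows and c columns such that every column has exactly q+1 entries equal to 1 and any two distinct columns have at most one common row in which both have entry 1. Then c ≤ q²+q+1. -/
/-!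
Each column support `S` of weight `q + 1` contains `(q + 1) q` ordered pairs of distinct rows.
Two supports meeting in at most one row share no such pair, so the `c` supports contribute
`c (q + 1) q` distinct pairs among the `n (n - 1) = n (q + 1) q` ordered pairs of distinct rows,
where `n = q² + q + 1`. Dividing by `(q + 1) q > 0` gives `c ≤ n`.
-/

open Finset

namespace Finset

variable {α : Type*} [DecidableEq α]

theorem disjoint_offDiag_of_card_inter_le_one {s t : Finset α} (h : #(s ∩ t) ≤ 1) :
    Disjoint s.offDiag t.offDiag := by
  rw [disjoint_iff_inter_eq_empty, ← offDiag_inter, ← card_eq_zero, offDiag_card]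
  exact Nat.sub_eq_zero_of_le (mul_le_of_le_one_left (Nat.zero_le _) h)

theorem card_mul_le_of_pairwise_card_inter_le_one {ι : Type*} [Fintype ι] [Fintype α]
    {S : ι → Finset α} {k : ℕ} (hS : ∀ i, #(S i) = k)
    (hinter : Pairwise fun i j => #(S i ∩ S j) ≤ 1) :
    Fintype.card ι * (k * (k - 1)) ≤ Fintype.card α * (Fintype.card α - 1) := by
  have hdisj : (Set.univ : Set ι).PairwiseDisjoint fun i => (S i).offDiag :=
    fun i _ j _ hij => disjoint_offDiag_of_card_inter_le_one (hinter hij)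
  calc Fintype.card ι * (k * (k - 1))
      = ∑ i, #(S i).offDiag := by simp [hS, Nat.mul_sub_one]
    _ = #(univ.biUnion fun i => (S i).offDiag) := (card_biUnion (by simpa using hdisj)).symm
    _ ≤ #(univ : Finset α).offDiag :=
        card_le_card (biUnion_subset.2 fun i _ => offDiag_mono (subset_univ _))
    _ = Fintype.card α * (Fintype.card α - 1) := by simp [Nat.mul_sub_one]

end Finset

/-- A binary matrix with `q² + q + 1` rows and `c` columns (`q ≥ 1`), each
column of weight exactly `q + 1`, in which any two distinct columns share at most one
common row with entry 1, satisfies `c ≤ q² + q + 1`. -/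
theorem statement_17 (q c : ℕ) (hq : 1 ≤ q)
    (M : Matrix (Fin (q ^ 2 + q + 1)) (Fin c) (ZMod 2))
    (hcol : ∀ j, (Finset.univ.filter fun i => M i j ≠ 0).card = q + 1)
    (hint : ∀ j₁ j₂, j₁ ≠ j₂ →
      (Finset.univ.filter fun i => M i j₁ ≠ 0 ∧ M i j₂ ≠ 0).card ≤ 1) :
    c ≤ q ^ 2 + q + 1 := by
  have hpairs := card_mul_le_of_pairwise_card_inter_le_one hcol
    fun j₁ j₂ hne => by simpa only [filter_and] using hint j₁ j₂ hne
  simp only [Fintype.card_fin, add_tsub_cancel_right] at hpairs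
  exact Nat.le_of_mul_le_mul_right (c := (q + 1) * q) (hpairs.trans_eq (by ring))
    (Nat.mul_pos q.succ_pos hq)
end
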